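/- arXiv:2507.10833 — 4 statements merged into one kernel-verified Lean document; each statement's English description precedes it below -/
import Mathlib

section
/- Let x ∈ ℝ^n be a nonzero vector and x* ∈ {−1,1}^n be such that corr(x, x*) ≥ 1 − δ for some δ ∈ (0,1). Then corr(sgn(x), x*) ≥ 1 − 4δ, where sgn(x) ∈ {−1,1}^n is obtained by applying sgn entrywise to x. -/
/-!
Normalise `x` and `x*` to unit vectors `u = x/‖x‖` and `w = x*/√n`. Then
`‖u - w‖² = 2(1 - corr(x, x*)) ≤ 2δ`, and at every coordinate where `sgn(x)` and `x*` disagree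
`u` and `w` have opposite signs, so that coordinate contributes at least `wᵢ² = 1/n` to
`‖u - w‖²`. Hence at most `2δn` signs disagree, and `⟨sgn(x), x*⟩ ≥ n - 2 · 2δn`.
-/

open Finset

/-- Unlike `Real.sign` and `SignType.sign`, this sends `0` to `1`. -/
noncomputable def sgn (z : ℝ) : ℝ := if 0 ≤ z then 1 else -1

lemma sgn_sq (z : ℝ) : sgn z ^ 2 = 1 := by
  unfold sgn; split_ifs <;> norm_num

lemma sq_eq_one_of_eq_one_or_eq_neg_one {c : ℝ} (hc : c = 1 ∨ c = -1) : c ^ 2 = 1 := by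
  rcases hc with rfl | rfl <;> norm_num

/-- When the signs of `a` and `c` disagree, `α a` and `- β c` have the same sign. -/
lemma one_sub_sgn_mul_mul_sq_le {a c α β : ℝ} (hc : c = 1 ∨ c = -1) (hα : 0 ≤ α) (hβ : 0 ≤ β) :
    (1 - sgn a * c) * β ^ 2 ≤ 2 * (α * a - β * c) ^ 2 := by
  unfold sgn
  rcases hc with rfl | rfl <;> split_ifs with ha
  · nlinarith [sq_nonneg (α * a - β * 1)]
  · nlinarith [mul_nonpos_of_nonneg_of_nonpos hα (not_le.mp ha).le]
  · nlinarith [mul_nonneg hα ha]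
  · nlinarith [sq_nonneg (α * a - β * (-1))]

section

variable {ι : Type*} [Fintype ι]

lemma sum_sq_eq_card_of_eq_one_or_eq_neg_one {c : ι → ℝ} (hc : ∀ i, c i = 1 ∨ c i = -1) :
    ∑ i, c i ^ 2 = Fintype.card ι := by
  simp [fun i => sq_eq_one_of_eq_one_or_eq_neg_one (hc i)]

lemma sum_sq_sub_sqrt_mul_eq (a c : ι → ℝ) :
    ∑ i, (√(∑ j, c j ^ 2) * a i - √(∑ j, a j ^ 2) * c i) ^ 2 =
      2 * (∑ i, a i ^ 2) * (∑ i, c i ^ 2) -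
        2 * (√(∑ i, a i ^ 2) * √(∑ i, c i ^ 2)) * ∑ i, a i * c i := by
  have hA := Real.sq_sqrt (by positivity : 0 ≤ ∑ i, a i ^ 2)
  have hC := Real.sq_sqrt (by positivity : 0 ≤ ∑ i, c i ^ 2)
  have hcross : ∑ i, 2 * (√(∑ j, c j ^ 2) * a i) * (√(∑ j, a j ^ 2) * c i) =
      2 * (√(∑ i, a i ^ 2) * √(∑ i, c i ^ 2)) * ∑ i, a i * c i := by
    rw [mul_sum]; exact sum_congr rfl fun i _ => by ring
  simp only [sub_sq, mul_pow, sum_add_distrib, sum_sub_distrib, hcross, ← mul_sum, hA, hC]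
  ring

lemma sum_one_sub_sgn_mul_mul_le {a c : ι → ℝ} (hc : ∀ i, c i = 1 ∨ c i = -1) :
    (∑ i, (1 - sgn (a i) * c i)) * ∑ i, a i ^ 2 ≤
      2 * ∑ i, (√(∑ j, c j ^ 2) * a i - √(∑ j, a j ^ 2) * c i) ^ 2 := by
  rw [sum_mul, mul_sum]
  refine sum_le_sum fun i _ => ?_
  have h := one_sub_sgn_mul_mul_sq_le (a := a i) (hc i) (Real.sqrt_nonneg (∑ j, c j ^ 2))
    (Real.sqrt_nonneg (∑ j, a j ^ 2))
  rwa [Real.sq_sqrt (by positivity : 0 ≤ ∑ j, a j ^ 2)] at h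

lemma card_mul_le_sum_sgn_mul {a c : ι → ℝ} {δ : ℝ} (ha : a ≠ 0)
    (hc : ∀ i, c i = 1 ∨ c i = -1)
    (hcorr : 1 - δ ≤ (∑ i, a i * c i) / (√(∑ i, a i ^ 2) * √(∑ i, c i ^ 2))) :
    (1 - 4 * δ) * Fintype.card ι ≤ ∑ i, sgn (a i) * c i := by
  obtain ⟨k, hk⟩ := Function.ne_iff.mp ha
  have hA : 0 < ∑ i, a i ^ 2 :=
    sum_pos' (fun i _ => sq_nonneg (a i)) ⟨k, mem_univ k, sq_pos_of_ne_zero hk⟩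
  have hN : (0 : ℝ) < Fintype.card ι := Nat.cast_pos.mpr (Fintype.card_pos_iff.mpr ⟨k⟩)
  have h := sum_one_sub_sgn_mul_mul_le (a := a) hc
  rw [sum_sq_sub_sqrt_mul_eq, sum_sub_distrib, sum_const, card_univ, nsmul_one] at h
  rw [sum_sq_eq_card_of_eq_one_or_eq_neg_one hc] at h hcorr
  rw [← Real.sqrt_mul hA.le] at h hcorr
  have hP : √((∑ i, a i ^ 2) * Fintype.card ι) * √((∑ i, a i ^ 2) * Fintype.card ι) =
      (∑ i, a i ^ 2) * Fintype.card ι := Real.mul_self_sqrt (by positivity)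
  have hP0 : 0 < √((∑ i, a i ^ 2) * Fintype.card ι) := by positivity
  have hPcorr := mul_le_mul_of_nonneg_left ((le_div_iff₀ hP0).mp hcorr) hP0.le
  rw [mul_left_comm, hP] at hPcorr
  have hbound : (Fintype.card ι - ∑ i, sgn (a i) * c i) * ∑ i, a i ^ 2 ≤
      4 * δ * Fintype.card ι * ∑ i, a i ^ 2 := by
    linarith
  linarith [le_of_mul_le_mul_right hbound hA]

end

theorem stmt0_general (n : ℕ) (x xstar : Fin n → ℝ) (δ : ℝ)
    (hx : x ≠ 0)
    (hxstar : ∀ i, xstar i = 1 ∨ xstar i = -1)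
    (hcorr : (∑ i, x i * xstar i) /
        (Real.sqrt (∑ i, (x i) ^ 2) * Real.sqrt (∑ i, (xstar i) ^ 2)) ≥ 1 - δ) :
    (∑ i, (if 0 ≤ x i then (1 : ℝ) else -1) * xstar i) /
        (Real.sqrt (∑ i, (if 0 ≤ x i then (1 : ℝ) else -1) ^ 2) *
          Real.sqrt (∑ i, (xstar i) ^ 2)) ≥ 1 - 4 * δ := by
  have hn : (0 : ℝ) < n := Nat.cast_pos.mpr <| Nat.pos_of_ne_zero <| by
    rintro rfl; exact hx (funext fun i => i.elim0)
  have hsgn : ∑ i, sgn (x i) ^ 2 = n := by simp [sgn_sq]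
  have hstar : ∑ i, xstar i ^ 2 = n := by
    simpa using sum_sq_eq_card_of_eq_one_or_eq_neg_one hxstar
  change 1 - 4 * δ ≤ (∑ i, sgn (x i) * xstar i) / (√(∑ i, sgn (x i) ^ 2) * √(∑ i, xstar i ^ 2))
  rw [hsgn, hstar, Real.mul_self_sqrt hn.le, le_div_iff₀ hn]
  simpa only [Fintype.card_fin] using card_mul_le_sum_sgn_mul hx hxstar hcorr

/-- For a nonzero `x : ℝⁿ` and `x* ∈ {−1,1}ⁿ` with `corr(x, x*) ≥ 1 − δ`, `δ ∈ (0,1)`,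
we have `corr(sgn(x), x*) ≥ 1 − 4δ`, where `corr(u,v) = ⟨u,v⟩/(‖u‖₂‖v‖₂)` and `sgn`
is applied entrywise (`sgn z = 1` if `z ≥ 0`, `−1` otherwise). -/
theorem stmt0 (n : ℕ) (x xstar : Fin n → ℝ) (δ : ℝ)
    (hx : x ≠ 0)
    (hxstar : ∀ i, xstar i = 1 ∨ xstar i = -1)
    (hδ : 0 < δ ∧ δ < 1)
    (hcorr : (∑ i, x i * xstar i) /
        (Real.sqrt (∑ i, (x i) ^ 2) * Real.sqrt (∑ i, (xstar i) ^ 2)) ≥ 1 - δ) :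
    (∑ i, (if 0 ≤ x i then (1 : ℝ) else -1) * xstar i) /
        (Real.sqrt (∑ i, (if 0 ≤ x i then (1 : ℝ) else -1) ^ 2) *
          Real.sqrt (∑ i, (xstar i) ^ 2)) ≥ 1 - 4 * δ :=
  stmt0_general n x xstar δ hx hxstar hcorr
end

section
/- Let k ≥ 1 and let Q be a probability distribution on {−1,1}^k (i.e., Q(y) ≥ 0 for all y and Σ_{y∈{−1,1}^k} Q(y) = 1) whose support is a proper subset of {−1,1}^k. Then there exists a nonempty set S ⊆ [k] with |Q̂(S)| > 4^{−k}. -/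
/-!
Fourier inversion at a point `z` outside the support gives
`0 = Q z = ∑_S Q̂(S) χ_S(z)` with `Q̂(∅) = 2^{-k}` and `|χ_S(z)| = 1`, so the `2^k - 1` nonempty
coefficients have absolute values summing to at least `2^{-k}`, and one of them exceeds
`2^{-k} / (2^k - 1) > 4^{-k}`.
-/

open Finset

namespace BoolCube

variable {ι : Type*}

def walsh (S : Finset ι) (y : ι → Bool) : ℝ := ∏ j ∈ S, if y j then 1 else -1

lemma abs_walsh (S : Finset ι) (y : ι → Bool) : |walsh S y| = 1 := by
  rw [walsh, abs_prod]
  exact prod_eq_one fun j _ => by cases y j <;> simp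

variable [Fintype ι]

lemma sum_walsh_mul_walsh_eq_prod (y z : ι → Bool) :
    ∑ S, walsh S y * walsh S z =
      ∏ j, (1 + (if y j then 1 else -1) * (if z j then 1 else -1) : ℝ) := by
  rw [prod_one_add, powerset_univ]
  exact sum_congr rfl fun S _ => prod_mul_distrib.symm

lemma sum_walsh_mul_self (y : ι → Bool) :
    ∑ S, walsh S y * walsh S y = 2 ^ Fintype.card ι := by
  rw [sum_walsh_mul_walsh_eq_prod, ← card_univ, ← prod_const]
  exact prod_congr rfl fun j _ => by cases y j <;> norm_num

lemma sum_walsh_mul_walsh_of_ne {y z : ι → Bool} (h : y ≠ z) :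
    ∑ S, walsh S y * walsh S z = 0 := by
  obtain ⟨j, hj⟩ := Function.ne_iff.mp h
  rw [sum_walsh_mul_walsh_eq_prod]
  refine prod_eq_zero (mem_univ j) ?_
  cases hy : y j <;> cases hz : z j <;> simp_all

variable [DecidableEq ι]

noncomputable def fourierCoeff (Q : (ι → Bool) → ℝ) (S : Finset ι) : ℝ :=
  (2 : ℝ) ^ (-(Fintype.card ι : ℤ)) * ∑ y, Q y * walsh S y

theorem sum_fourierCoeff_mul_walsh (Q : (ι → Bool) → ℝ) (z : ι → Bool) :
    ∑ S, fourierCoeff Q S * walsh S z = Q z := by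
  have h : ∑ S, (∑ y, Q y * walsh S y) * walsh S z = Q z * 2 ^ Fintype.card ι := by
    simp_rw [sum_mul, mul_assoc]
    rw [sum_comm]
    simp_rw [← mul_sum]
    rw [sum_eq_single z (fun y _ hy => by rw [sum_walsh_mul_walsh_of_ne hy, mul_zero])
      (by simp), sum_walsh_mul_self]
  simp_rw [fourierCoeff, mul_assoc, ← mul_sum, h, zpow_neg, zpow_natCast]
  field_simp

lemma fourierCoeff_empty (Q : (ι → Bool) → ℝ) :
    fourierCoeff Q ∅ = (2 : ℝ) ^ (-(Fintype.card ι : ℤ)) * ∑ y, Q y := by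
  simp [fourierCoeff, walsh]

theorem exists_abs_fourierCoeff_gt {Q : (ι → Bool) → ℝ} (hQsum : ∑ y, Q y = 1) {z : ι → Bool}
    (hz : Q z = 0) :
    ∃ S : Finset ι, S.Nonempty ∧ (4 : ℝ) ^ (-(Fintype.card ι : ℤ)) < |fourierCoeff Q S| := by
  set x : ℝ := (2 : ℝ) ^ (-(Fintype.card ι : ℤ)) with hx
  have hx_pos : 0 < x := by positivity
  have hx_inv : (2 : ℝ) ^ Fintype.card ι * x = 1 := by
    rw [hx, zpow_neg, zpow_natCast, mul_inv_cancel₀ (by positivity)]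
  have h4 : (4 : ℝ) ^ (-(Fintype.card ι : ℤ)) = x * x := by
    rw [hx, ← mul_zpow]; norm_num
  have hrest : ∑ S ∈ univ.erase ∅, fourierCoeff Q S * walsh S z = -x := by
    have h := sum_fourierCoeff_mul_walsh Q z
    rw [hz, ← add_sum_erase _ _ (mem_univ ∅), fourierCoeff_empty, hQsum] at h
    rw [show walsh (∅ : Finset ι) z = 1 from prod_empty, mul_one] at h
    linarith
  have hsum : ∑ S ∈ (univ : Finset (Finset ι)).erase ∅, (4 : ℝ) ^ (-(Fintype.card ι : ℤ)) <
      ∑ S ∈ univ.erase ∅, |fourierCoeff Q S| := by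
    calc ∑ S ∈ univ.erase ∅, (4 : ℝ) ^ (-(Fintype.card ι : ℤ))
        = ((2 : ℝ) ^ Fintype.card ι - 1) * (x * x) := by
          rw [sum_const, card_erase_of_mem (mem_univ _), card_univ, Fintype.card_finset,
            nsmul_eq_mul, Nat.cast_sub Nat.one_le_two_pow, h4]
          push_cast; ring
      _ < x := by nlinarith
      _ = |∑ S ∈ univ.erase ∅, fourierCoeff Q S * walsh S z| := by
          rw [hrest, abs_neg, abs_of_pos hx_pos]
      _ ≤ ∑ S ∈ univ.erase ∅, |fourierCoeff Q S| := by
          refine (abs_sum_le_sum_abs _ _).trans_eq (sum_congr rfl fun S _ => ?_)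
          rw [abs_mul, abs_walsh, mul_one]
  obtain ⟨S, hS, hlt⟩ := exists_lt_of_sum_lt hsum
  exact ⟨S, nonempty_of_ne_empty (ne_of_mem_erase hS), hlt⟩

end BoolCube

theorem stmt3_general (k : ℕ) (Q : (Fin k → Bool) → ℝ)
    (hQsum : ∑ y : Fin k → Bool, Q y = 1)
    (hsupp : ∃ y : Fin k → Bool, Q y = 0) :
    ∃ S : Finset (Fin k), S.Nonempty ∧
      |(2 : ℝ) ^ (-(k : ℤ)) *
        ∑ y : Fin k → Bool, Q y * ∏ j ∈ S, (if y j then (1 : ℝ) else -1)| >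
      (4 : ℝ) ^ (-(k : ℤ)) := by
  obtain ⟨z, hz⟩ := hsupp
  simpa [BoolCube.fourierCoeff, BoolCube.walsh] using BoolCube.exists_abs_fourierCoeff_gt hQsum hz

/-- If `Q` is a probability distribution on `{−1,1}^k` (encoded via `Fin k → Bool`,
with `true ↦ 1` and `false ↦ −1`) whose support is a proper subset of `{−1,1}^k`,
then some nonempty `S ⊆ [k]` has Fourier coefficient `|Q̂(S)| > 4^{−k}`, where
`Q̂(S) = 2^{−k} Σ_y Q(y) ∏_{j∈S} y_j`. -/
theorem stmt3 (k : ℕ) (hk : 1 ≤ k) (Q : (Fin k → Bool) → ℝ)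
    (hQnonneg : ∀ y, 0 ≤ Q y)
    (hQsum : ∑ y : Fin k → Bool, Q y = 1)
    (hsupp : ∃ y : Fin k → Bool, Q y = 0) :
    ∃ S : Finset (Fin k), S.Nonempty ∧
      |(2 : ℝ) ^ (-(k : ℤ)) *
        ∑ y : Fin k → Bool, Q y * ∏ j ∈ S, (if y j then (1 : ℝ) else -1)| >
      (4 : ℝ) ^ (-(k : ℤ)) :=
  stmt3_general k Q hQsum hsupp
end

section
/- Let k ≥ 2 be an odd integer, let x* ∈ {−1,1}^n, let δ ∈ (0,1), and let Ẽ be a degree-(k+2) pseudo-expectation over the hypercube {−1,1}^n. If Ẽ[⟨x, x*⟩^k] ≥ n^k (1 − δ), then Ẽ[⟨x, x*⟩] ≥ n(1 − 2δ). Here ⟨x, x*⟩ denotes the polynomial Σ_{i=1}^n x_i x*_i in the variables x_1,…,x_n. -/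
open MvPolynomial

/-- A degree-`d` pseudo-expectation over the hypercube `{−1,1}ⁿ`: a linear functional on
real polynomials in `x_1, …, x_n` satisfying (i) `Ẽ[1] = 1`; (ii) `Ẽ[x_i² f] = Ẽ[f]`
for every `f` of degree at most `d − 2`; (iii) `Ẽ[f²] ≥ 0` for every `f` of degree at
most `d/2`. -/
structure PseudoExpectation (n d : ℕ) where
  toFun : MvPolynomial (Fin n) ℝ →ₗ[ℝ] ℝ
  normalized : toFun 1 = 1
  boolean : ∀ (i : Fin n) (f : MvPolynomial (Fin n) ℝ),
      f.totalDegree + 2 ≤ d → toFun (X i ^ 2 * f) = toFun f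
  posSq : ∀ f : MvPolynomial (Fin n) ℝ, 2 * f.totalDegree ≤ d → 0 ≤ toFun (f ^ 2)

/-!
Write `P = ⟨x, x*⟩`. On the hypercube `∑ᵢ (xᵢ - x*ᵢ)² = 2(n - P)`, so `Ẽ[(n - P) g²] ≥ 0`
for every `g` of degree at most `(k - 1)/2`. For odd `k = 2m + 1` the polynomial
`2(n^k - P^k) - n^(2m)(n - P)` is a nonnegative combination of such terms
`(n - P) q(P)²`, which gives `n^(2m) (n - Ẽ[P]) ≤ 2 (n^k - Ẽ[P^k]) ≤ 2 δ n^k`.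
-/

namespace MvPolynomial

variable {σ R : Type*} [CommSemiring R]

theorem totalDegree_aeval_le (p : MvPolynomial σ R) (q : Polynomial R) :
    (Polynomial.aeval p q).totalDegree ≤ q.natDegree * p.totalDegree := by
  rw [Polynomial.aeval_eq_sum_range]
  refine (totalDegree_finsetSum _ _).trans (Finset.sup_le fun i hi => ?_)
  have hi : i ≤ q.natDegree := Nat.lt_succ_iff.mp (Finset.mem_range.mp hi)
  calc (q.coeff i • p ^ i).totalDegree ≤ (p ^ i).totalDegree := totalDegree_smul_le _ _
    _ ≤ i * p.totalDegree := totalDegree_pow _ _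
    _ ≤ q.natDegree * p.totalDegree := Nat.mul_le_mul_right _ hi

theorem totalDegree_sum_C_mul_X_le [Fintype σ] (a : σ → R) :
    (∑ i, C (a i) * X i).totalDegree ≤ 1 := by
  refine (totalDegree_finsetSum _ _).trans (Finset.sup_le fun i _ => ?_)
  rw [C_mul_X_eq_monomial]
  exact (totalDegree_monomial_le _ _).trans_eq (by simp)

end MvPolynomial

section GapBound

variable {A : Type*} [CommRing A] [Algebra ℝ A] (L : A →ₗ[ℝ] ℝ) (c : ℝ) (p : A)

/-- With `a = algebraMap ℝ A c` and `D m` the argument of `L`, one has `D 0 = 0` and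
`D (m + 1) = c² D m + (a - p) ((p + c) p^m)²`. -/
theorem LinearMap.map_two_mul_pow_sub_pow_sub_nonneg {m : ℕ}
    (hL : ∀ q : Polynomial ℝ, q.natDegree ≤ m →
      0 ≤ L ((algebraMap ℝ A c - p) * Polynomial.aeval p q ^ 2)) :
    0 ≤ L (2 * (algebraMap ℝ A c ^ (2 * m + 1) - p ^ (2 * m + 1))
      - algebraMap ℝ A c ^ (2 * m) * (algebraMap ℝ A c - p)
      - (algebraMap ℝ A c - p) * (p ^ m) ^ 2) := by
  induction m with
  | zero => exact le_of_eq (by rw [← map_zero L]; congr 1; ring)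
  | succ m ih =>
    set a := algebraMap ℝ A c
    have hstep : 2 * (a ^ (2 * (m + 1) + 1) - p ^ (2 * (m + 1) + 1))
          - a ^ (2 * (m + 1)) * (a - p) - (a - p) * (p ^ (m + 1)) ^ 2
        = c ^ 2 • (2 * (a ^ (2 * m + 1) - p ^ (2 * m + 1)) - a ^ (2 * m) * (a - p)
            - (a - p) * (p ^ m) ^ 2)
          + (a - p)
            * Polynomial.aeval p ((Polynomial.X + Polynomial.C c) * Polynomial.X ^ m) ^ 2 := by
      simp only [Algebra.smul_def, map_mul, map_add, map_pow, Polynomial.aeval_C,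
        Polynomial.aeval_X, a]
      ring
    have hdeg : ((Polynomial.X + Polynomial.C c) * Polynomial.X ^ m).natDegree ≤ m + 1 := by
      refine Polynomial.natDegree_mul_le.trans ?_
      rw [Polynomial.natDegree_X_add_C, Polynomial.natDegree_X_pow, add_comm]
    rw [hstep, map_add, map_smul, smul_eq_mul]
    exact add_nonneg (mul_nonneg (sq_nonneg c) (ih fun q hq => hL q (hq.trans m.le_succ)))
      (hL _ hdeg)

theorem LinearMap.pow_mul_map_sub_le_two_mul_map_pow_sub_pow {m : ℕ}
    (hL : ∀ q : Polynomial ℝ, q.natDegree ≤ m →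
      0 ≤ L ((algebraMap ℝ A c - p) * Polynomial.aeval p q ^ 2)) :
    c ^ (2 * m) * L (algebraMap ℝ A c - p)
      ≤ 2 * L (algebraMap ℝ A c ^ (2 * m + 1) - p ^ (2 * m + 1)) := by
  have hD := L.map_two_mul_pow_sub_pow_sub_nonneg c p hL
  have hlast := hL (Polynomial.X ^ m) (by simp)
  rw [map_pow, Polynomial.aeval_X] at hlast
  have hsmul : 2 * (algebraMap ℝ A c ^ (2 * m + 1) - p ^ (2 * m + 1))
        - algebraMap ℝ A c ^ (2 * m) * (algebraMap ℝ A c - p)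
      = (2 : ℝ) • (algebraMap ℝ A c ^ (2 * m + 1) - p ^ (2 * m + 1))
        - c ^ (2 * m) • (algebraMap ℝ A c - p) := by
    simp only [Algebra.smul_def, map_pow, map_ofNat]
  rw [hsmul, map_sub, map_sub, map_smul, map_smul, smul_eq_mul, smul_eq_mul] at hD
  linarith

end GapBound

namespace PseudoExpectation

variable {n d : ℕ} (E : PseudoExpectation n d)

theorem map_C (c : ℝ) : E.toFun (C c) = c := by
  rw [← mul_one (C c), ← smul_eq_C_mul, map_smul, E.normalized, smul_eq_mul, mul_one]

theorem map_sq_X_sub_C_mul (i : Fin n) {a : ℝ} (ha : a ^ 2 = 1) (g : MvPolynomial (Fin n) ℝ)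
    (hg : 2 * g.totalDegree + 2 ≤ d) :
    E.toFun (((X i - C a) * g) ^ 2) = 2 * E.toFun ((1 - C a * X i) * g ^ 2) := by
  have hCa : (C a : MvPolynomial (Fin n) ℝ) ^ 2 = 1 := by rw [← map_pow, ha, map_one]
  have hbool : E.toFun (X i ^ 2 * g ^ 2) = E.toFun (g ^ 2) :=
    E.boolean i _ (by have := totalDegree_pow g 2; omega)
  have hexp :
      ((X i - C a) * g) ^ 2 = X i ^ 2 * g ^ 2 + 2 • ((1 - C a * X i) * g ^ 2) - g ^ 2 := by
    rw [two_smul]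
    linear_combination g ^ 2 * hCa
  rw [hexp, map_sub, map_add, map_nsmul, hbool, two_nsmul]
  ring

theorem map_sub_sum_mul_sq_nonneg {a : Fin n → ℝ} (ha : ∀ i, a i ^ 2 = 1)
    (g : MvPolynomial (Fin n) ℝ) (hg : 2 * g.totalDegree + 2 ≤ d) :
    0 ≤ E.toFun ((C (n : ℝ) - ∑ i, C (a i) * X i) * g ^ 2) := by
  have hsum : ∑ i, E.toFun (((X i - C (a i)) * g) ^ 2)
      = 2 * E.toFun ((C (n : ℝ) - ∑ i, C (a i) * X i) * g ^ 2) := by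
    simp only [E.map_sq_X_sub_C_mul _ (ha _) g hg, ← Finset.mul_sum, ← map_sum, ← Finset.sum_mul,
      Finset.sum_sub_distrib, Finset.sum_const, Finset.card_univ, Fintype.card_fin, nsmul_one,
      map_natCast]
  have hpos : 0 ≤ ∑ i, E.toFun (((X i - C (a i)) * g) ^ 2) := by
    refine Finset.sum_nonneg fun i _ => E.posSq _ ?_
    have : (X i - C (a i)).totalDegree ≤ 1 :=
      (totalDegree_sub _ _).trans (max_le (by simp [totalDegree_X]) (by simp))
    have := totalDegree_mul (X i - C (a i)) g
    omega
  linarith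

end PseudoExpectation

theorem stmt4_general (n k : ℕ) (hodd : Odd k)
    (xstar : Fin n → ℝ) (hxstar : ∀ i, xstar i = 1 ∨ xstar i = -1)
    (δ : ℝ)
    (E : PseudoExpectation n (k + 2))
    (h : E.toFun ((∑ i, C (xstar i) * X i) ^ k) ≥ (n : ℝ) ^ k * (1 - δ)) :
    E.toFun (∑ i, C (xstar i) * X i) ≥ (n : ℝ) * (1 - 2 * δ) := by
  obtain ⟨m, rfl⟩ := hodd
  have hsq (i : Fin n) : xstar i ^ 2 = 1 := by rcases hxstar i with h | h <;> simp [h]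
  rcases Nat.eq_zero_or_pos n with rfl | hn
  · simp
  set P : MvPolynomial (Fin n) ℝ := ∑ i, C (xstar i) * X i
  have hdeg (q : Polynomial ℝ) (hq : q.natDegree ≤ m) :
      2 * (Polynomial.aeval P q).totalDegree + 2 ≤ 2 * m + 1 + 2 := by
    have := (totalDegree_aeval_le P q).trans
      (Nat.mul_le_mul hq (totalDegree_sum_C_mul_X_le xstar))
    omega
  have hgap := E.toFun.pow_mul_map_sub_le_two_mul_map_pow_sub_pow (n : ℝ) P
    fun q hq => E.map_sub_sum_mul_sq_nonneg hsq _ (hdeg q hq)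
  rw [algebraMap_eq, ← map_pow, map_sub, map_sub, E.map_C, E.map_C] at hgap
  have hpow : (0 : ℝ) < (n : ℝ) ^ (2 * m) := by positivity
  rw [pow_succ (n : ℝ)] at hgap h
  have hscaled : (n : ℝ) ^ (2 * m) * (n - E.toFun P) ≤ (n : ℝ) ^ (2 * m) * (2 * δ * n) := by
    linear_combination hgap + 2 * h
  linarith [le_of_mul_le_mul_left hscaled hpow]

/-- For odd `k ≥ 2`, `x* ∈ {−1,1}ⁿ`, `δ ∈ (0,1)`, and a degree-`(k+2)` pseudo-expectation
`Ẽ` over the hypercube: if `Ẽ[⟨x,x*⟩^k] ≥ n^k (1−δ)` then `Ẽ[⟨x,x*⟩] ≥ n(1−2δ)`. -/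
theorem stmt4 (n k : ℕ) (hk : 2 ≤ k) (hodd : Odd k)
    (xstar : Fin n → ℝ) (hxstar : ∀ i, xstar i = 1 ∨ xstar i = -1)
    (δ : ℝ) (hδ : 0 < δ ∧ δ < 1)
    (E : PseudoExpectation n (k + 2))
    (h : E.toFun ((∑ i, C (xstar i) * X i) ^ k) ≥ (n : ℝ) ^ k * (1 - δ)) :
    E.toFun (∑ i, C (xstar i) * X i) ≥ (n : ℝ) * (1 - 2 * δ) :=
  stmt4_general n k hodd xstar hxstar δ E h
end

section
/- Let k ≥ 2 be an even integer, let x* ∈ {−1,1}^n, let δ ∈ (0,1), and let Ẽ be a degree-(k+2) pseudo-expectation over the hypercube {−1,1}^n. If Ẽ[⟨x, x*⟩^k] ≥ n^k (1 − δ), then Ẽ[⟨x, x*⟩²] ≥ n² (1 − 2δ). Here ⟨x, x*⟩ denotes the polynomial Σ_{i=1}^n x_i x*_i in the variables x_1,…,x_n. -/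
open MvPolynomial

/-
Write `p = ⟨x, x*⟩ = ∑ aᵢ` with `aᵢ = x*ᵢ xᵢ`. The sum-of-squares identity
`∑ᵢ ∑ⱼ (aᵢ - aⱼ)² = 2 (n ∑ᵢ aᵢ² - p²)`, multiplied by `q²` and evaluated by `Ẽ`, gives
`Ẽ[p² q²] ≤ n ∑ᵢ Ẽ[aᵢ² q²] = n² Ẽ[q²]`, since `aᵢ² = xᵢ²` and `Ẽ` reduces `xᵢ²` to `1`.
Taking `q = p^m` and iterating yields `Ẽ[p^k] ≤ n^(k-2) Ẽ[p²]`, hence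
`Ẽ[p²] ≥ n² (1 - δ) ≥ n² (1 - 2δ)`.
-/

theorem Finset.sum_sum_sub_sq {ι R : Type*} [Fintype ι] [CommRing R] (a : ι → R) :
    ∑ i, ∑ j, (a i - a j) ^ 2 = 2 * (Fintype.card ι * ∑ i, a i ^ 2 - (∑ i, a i) ^ 2) := by
  simp only [sub_sq, Finset.sum_add_distrib, Finset.sum_sub_distrib, Finset.sum_const,
    Finset.card_univ, nsmul_eq_mul, ← Finset.mul_sum, ← Finset.sum_mul]
  ring

theorem MvPolynomial.totalDegree_C_mul_X_le {σ R : Type*} [CommSemiring R] [Nontrivial R]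
    (r : R) (i : σ) : (C r * X i : MvPolynomial σ R).totalDegree ≤ 1 :=
  (totalDegree_mul _ _).trans (by simp [totalDegree_X])

theorem MvPolynomial.totalDegree_sum_C_mul_X_le_s5 {σ R : Type*} [Fintype σ] [CommSemiring R]
    [Nontrivial R] (c : σ → R) : (∑ i, C (c i) * X i : MvPolynomial σ R).totalDegree ≤ 1 :=
  totalDegree_finsetSum_le fun i _ => totalDegree_C_mul_X_le (c i) i

namespace PseudoExpectation

variable {n d : ℕ} (E : PseudoExpectation n d)

theorem toFun_linearForm_sq_mul_sq_le (c : Fin n → ℝ) {q : MvPolynomial (Fin n) ℝ}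
    (hq : 2 * (q.totalDegree + 1) ≤ d) :
    E.toFun ((∑ i, C (c i) * X i) ^ 2 * q ^ 2) ≤ n * (∑ i, c i ^ 2) * E.toFun (q ^ 2) := by
  set a : Fin n → MvPolynomial (Fin n) ℝ := fun i => C (c i) * X i
  have hsos : 0 ≤ E.toFun (∑ i, ∑ j, ((a i - a j) * q) ^ 2) := by
    simp only [map_sum]
    refine Finset.sum_nonneg fun i _ => Finset.sum_nonneg fun j _ => E.posSq _ ?_
    have hsub : (a i - a j).totalDegree ≤ 1 := (totalDegree_sub _ _).trans
      (max_le (totalDegree_C_mul_X_le _ _) (totalDegree_C_mul_X_le _ _))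
    have := totalDegree_mul (a i - a j) q
    omega
  have hbool : ∀ i, E.toFun (a i ^ 2 * q ^ 2) = c i ^ 2 * E.toFun (q ^ 2) := fun i => by
    have hq2 : (q ^ 2).totalDegree + 2 ≤ d := by
      have := totalDegree_pow q 2
      omega
    rw [show a i ^ 2 * q ^ 2 = C (c i ^ 2) * (X i ^ 2 * q ^ 2) by simp only [a, map_pow]; ring,
      ← smul_eq_C_mul, map_smul, E.boolean i _ hq2, smul_eq_mul]
  have hexpand : ∑ i, ∑ j, ((a i - a j) * q) ^ 2
      = (2 * n : ℝ) • ∑ i, a i ^ 2 * q ^ 2 - (2 : ℝ) • ((∑ i, a i) ^ 2 * q ^ 2) := by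
    simp only [mul_pow, ← Finset.sum_mul, Finset.sum_sum_sub_sq, Fintype.card_fin, smul_eq_C_mul,
      map_mul, map_ofNat, map_natCast]
    ring
  rw [hexpand, map_sub, map_smul, map_smul, map_sum] at hsos
  simp only [hbool, smul_eq_mul, ← Finset.sum_mul] at hsos
  linarith

theorem toFun_linearForm_pow_le (c : Fin n → ℝ) {m : ℕ} (hm : 2 * (m + 1) ≤ d) :
    E.toFun ((∑ i, C (c i) * X i) ^ (2 * (m + 1)))
      ≤ (n * ∑ i, c i ^ 2) ^ m * E.toFun ((∑ i, C (c i) * X i) ^ 2) := by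
  set p : MvPolynomial (Fin n) ℝ := ∑ i, C (c i) * X i
  induction m with
  | zero => simp
  | succ m ih =>
    have hdeg : 2 * ((p ^ (m + 1)).totalDegree + 1) ≤ d := by
      have := (totalDegree_pow p (m + 1)).trans
        (Nat.mul_le_mul_left _ (totalDegree_sum_C_mul_X_le_s5 c))
      omega
    calc E.toFun (p ^ (2 * (m + 1 + 1))) = E.toFun (p ^ 2 * (p ^ (m + 1)) ^ 2) := by
          rw [← pow_mul, ← pow_add]; ring_nf
      _ ≤ n * (∑ i, c i ^ 2) * E.toFun ((p ^ (m + 1)) ^ 2) :=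
        E.toFun_linearForm_sq_mul_sq_le c hdeg
      _ ≤ n * (∑ i, c i ^ 2) * ((n * ∑ i, c i ^ 2) ^ m * E.toFun (p ^ 2)) := by
        rw [← pow_mul, mul_comm (m + 1)]
        exact mul_le_mul_of_nonneg_left (ih (by omega)) (by positivity)
      _ = (n * ∑ i, c i ^ 2) ^ (m + 1) * E.toFun (p ^ 2) := by ring

end PseudoExpectation

/-- For even `k ≥ 2`, `x* ∈ {−1,1}ⁿ`, `δ ∈ (0,1)`, and a degree-`(k+2)` pseudo-expectation
`Ẽ` over the hypercube: if `Ẽ[⟨x,x*⟩^k] ≥ n^k (1−δ)` then `Ẽ[⟨x,x*⟩²] ≥ n²(1−2δ)`. -/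
theorem stmt5 (n k : ℕ) (hk : 2 ≤ k) (heven : Even k)
    (xstar : Fin n → ℝ) (hxstar : ∀ i, xstar i = 1 ∨ xstar i = -1)
    (δ : ℝ) (hδ : 0 < δ ∧ δ < 1)
    (E : PseudoExpectation n (k + 2))
    (h : E.toFun ((∑ i, C (xstar i) * X i) ^ k) ≥ (n : ℝ) ^ k * (1 - δ)) :
    E.toFun ((∑ i, C (xstar i) * X i) ^ 2) ≥ (n : ℝ) ^ 2 * (1 - 2 * δ) := by
  rcases n.eq_zero_or_pos with rfl | hn
  · simp
  obtain ⟨m, rfl⟩ : ∃ m, k = 2 * (m + 1) := by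
    obtain ⟨j, rfl⟩ := heven
    exact ⟨j - 1, by omega⟩
  have hnorm : (n : ℝ) * ∑ i, xstar i ^ 2 = n ^ 2 := by
    have hsq : ∀ i, xstar i ^ 2 = 1 := fun i => by rcases hxstar i with h | h <;> simp [h]
    simp [hsq, sq]
  have hpow := E.toFun_linearForm_pow_le xstar (m := m) (by omega)
  rw [hnorm, ← pow_mul] at hpow
  have hnm : (0 : ℝ) < n ^ (2 * m) := by positivity
  have hlower : (n : ℝ) ^ (2 * m) * (n ^ 2 * (1 - δ))
      ≤ n ^ (2 * m) * E.toFun ((∑ i, C (xstar i) * X i) ^ 2) := by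
    have : (n : ℝ) ^ (2 * (m + 1)) = n ^ (2 * m) * n ^ 2 := by ring
    nlinarith
  nlinarith [le_of_mul_le_mul_left hlower hnm, hδ.1, sq_nonneg (n : ℝ)]
end
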